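/- Let g₁,...,g_n : ℝ^d → ℝ be measurable and h_i(z) = ‖z − y'_i‖₂ for fixed vectors y'_i ∈ ℝ^d. Each h_i is 1-Lipschitz with respect to the ℓ² norm, and hence for any family F of functions from a set X to ℝ^d and any points x₁,...,x_n ∈ X, E_ξ[sup_{f∈F} ∑_{i=1}^n ξ_i h_i(f(x_i))] ≤ √2 · E_ξ[sup_{f∈F} ∑_{i=1}^n ∑_{k=1}^d ξ_{ik} f_k(x_i)], where ξ_i and ξ_{ik} are i.i.d. Rademacher signs. -/

import Mathlib

/-!
Maurer's argument replaces the Lipschitz terms by coordinatewise sign sums one index at a time.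
For a single index and an arbitrary offset `A`, averaging `sup_r (A r + b h r)` over the sign `b`
gives `(A p + h p + A q - h q) / 2` for maximisers `p, q`, which by the Lipschitz bound is at most
`(A p + A q + ‖v p - v q‖) / 2`. Szarek's sharp Khintchine inequality
`‖u‖ ≤ √2 𝔼_τ |∑ τ_k u_k|` turns the norm into an average over signs `τ`, and for each `τ` the
pair `p, q` is dominated by the suprema with signs `τ` and `-τ`, which have the same average.

Szarek's inequality follows from Walsh–Fourier analysis on the cube (Latała–Oleszkiewicz). The
function `f ε = |∑ ε_k u_k|` is even, so its odd-order Walsh coefficients vanish and every other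
nonconstant one has order at least `2`. By Parseval, `𝔼 f² - (𝔼 f)²` is therefore at most half
the total influence `∑_i 𝔼 (flipDiff i f)²`, and `|flipDiff i f| ≤ |u_i|` bounds this by
`‖u‖² / 2 = 𝔼 f² / 2`.
-/

/-- The sign `+1`/`-1` associated to a Boolean. -/
def radSign (b : Bool) : ℝ := if b then 1 else -1

open Finset
open scoped BigOperators

lemma radSign_not (b : Bool) : radSign (!b) = -radSign b := by
  cases b <;> simp [radSign]

lemma radSign_mul_self (b : Bool) : radSign b * radSign b = 1 := by
  cases b <;> simp [radSign]

lemma expect_radSign : 𝔼 b, radSign b = 0 := by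
  rw [Fintype.expect_eq_sum_div_card]
  simp [radSign]

section SignCube

variable {ι M : Type*} [DecidableEq ι] [AddCommMonoid M] [Module ℚ≥0 M]

def flipAt (i : ι) (ε : ι → Bool) : ι → Bool := Function.update ε i (!ε i)

@[simp] lemma flipAt_self (i : ι) (ε : ι → Bool) : flipAt i ε i = !ε i := by
  simp [flipAt]

lemma flipAt_of_ne {i j : ι} (h : j ≠ i) (ε : ι → Bool) : flipAt i ε j = ε j := by
  simp [flipAt, h]

lemma flipAt_involutive (i : ι) : Function.Involutive (flipAt (ι := ι) i) := by
  intro ε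
  simp [flipAt]

variable [Fintype ι]

lemma expect_comp_not (g : (ι → Bool) → M) : 𝔼 ε : ι → Bool, g (fun k ↦ !ε k) = 𝔼 ε, g ε :=
  Fintype.expect_equiv (Equiv.piCongrRight fun _ ↦ Equiv.boolNot) _ _ fun _ ↦ rfl

lemma expect_comp_flipAt (i : ι) (g : (ι → Bool) → M) : 𝔼 ε, g (flipAt i ε) = 𝔼 ε, g ε :=
  Fintype.expect_equiv (flipAt_involutive i).toPerm _ _ fun _ ↦ rfl

lemma expect_expect_update {β : Type*} [Fintype β] [Nonempty β] (g : (ι → β) → M) (i : ι) :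
    𝔼 ε, 𝔼 b, g (Function.update ε i b) = 𝔼 ε, g ε := by
  have hinv : Function.Involutive fun p : (ι → β) × β ↦ (Function.update p.1 i p.2, p.1 i) := by
    intro p
    simp
  calc 𝔼 ε, 𝔼 b, g (Function.update ε i b)
      = 𝔼 p : (ι → β) × β, g (Function.update p.1 i p.2) := (expect_product' _ _ _).symm
    _ = 𝔼 p : (ι → β) × β, g p.1 := Fintype.expect_equiv hinv.toPerm _ _ fun _ ↦ rfl
    _ = 𝔼 ε, 𝔼 _b : β, g ε := expect_product' _ _ (fun ε _ ↦ g ε)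
    _ = 𝔼 ε, g ε := by simp

end SignCube

section Walsh

variable {ι : Type*}

noncomputable def walsh (S : Finset ι) (ε : ι → Bool) : ℝ := ∏ k ∈ S, radSign (ε k)

lemma walsh_not (S : Finset ι) (ε : ι → Bool) :
    walsh S (fun k ↦ !ε k) = (-1) ^ S.card * walsh S ε := by
  simp [walsh, radSign_not, prod_neg]

lemma walsh_flipAt [DecidableEq ι] (S : Finset ι) (i : ι) (ε : ι → Bool) :
    walsh S (flipAt i ε) = if i ∈ S then -walsh S ε else walsh S ε := by
  have hrest : ∏ k ∈ S.erase i, radSign (flipAt i ε k) = ∏ k ∈ S.erase i, radSign (ε k) :=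
    prod_congr rfl fun k hk ↦ by rw [flipAt_of_ne (ne_of_mem_erase hk)]
  split_ifs with hi
  · simp only [walsh, ← mul_prod_erase S _ hi, hrest, flipAt_self, radSign_not, neg_mul]
  · exact prod_congr rfl fun k hk ↦ by rw [flipAt_of_ne (ne_of_mem_of_not_mem hk hi)]

variable [Fintype ι]

lemma sum_walsh_mul_walsh (ε δ : ι → Bool) :
    ∑ S, walsh S ε * walsh S δ = if ε = δ then 2 ^ Fintype.card ι else 0 := by
  have h : ∑ S, walsh S ε * walsh S δ = ∏ k, (1 + radSign (ε k) * radSign (δ k)) := by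
    simp only [walsh, ← prod_mul_distrib, prod_one_add, powerset_univ]
  rw [h]
  split_ifs with hεδ
  · simp [hεδ, radSign_mul_self, one_add_one_eq_two]
  · obtain ⟨k, hk⟩ := Function.ne_iff.mp hεδ
    refine prod_eq_zero (mem_univ k) ?_
    cases hε : ε k <;> cases hδ : δ k <;> simp_all [radSign]

variable [DecidableEq ι]

noncomputable def walshCoeff (f : (ι → Bool) → ℝ) (S : Finset ι) : ℝ := 𝔼 ε, f ε * walsh S ε

theorem sum_sq_walshCoeff (f : (ι → Bool) → ℝ) : ∑ S, walshCoeff f S ^ 2 = 𝔼 ε, f ε ^ 2 := by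
  calc ∑ S, walshCoeff f S ^ 2
      = 𝔼 ε, 𝔼 δ, f ε * f δ * ∑ S, walsh S ε * walsh S δ := by
        simp only [sq, walshCoeff, expect_mul_expect, mul_sum, expect_sum_comm]
        refine sum_congr rfl fun S _ ↦ ?_
        simp only [mul_mul_mul_comm]
    _ = 𝔼 ε, f ε ^ 2 := by
        refine expect_congr rfl fun ε _ ↦ ?_
        simp only [sum_walsh_mul_walsh, mul_ite, mul_zero, Fintype.expect_ite_eq,
          NNRat.smul_def, Fintype.card_fun, Fintype.card_bool]
        push_cast
        field_simp

lemma walshCoeff_empty (f : (ι → Bool) → ℝ) : walshCoeff f ∅ = 𝔼 ε, f ε := by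
  simp [walshCoeff, walsh]

lemma walshCoeff_eq_zero_of_odd {f : (ι → Bool) → ℝ} (hf : ∀ ε, f (fun k ↦ !ε k) = f ε)
    {S : Finset ι} (hS : Odd S.card) : walshCoeff f S = 0 := by
  have h : walshCoeff f S = -walshCoeff f S := by
    conv_lhs => rw [walshCoeff, ← expect_comp_not]
    simp only [hf, walsh_not, hS.neg_one_pow, walshCoeff, ← expect_neg_distrib]
    ring_nf
  linarith

noncomputable def flipDiff (i : ι) (f : (ι → Bool) → ℝ) (ε : ι → Bool) : ℝ :=
  (f ε - f (flipAt i ε)) / 2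

lemma walshCoeff_flipDiff (i : ι) (f : (ι → Bool) → ℝ) (S : Finset ι) :
    walshCoeff (flipDiff i f) S = if i ∈ S then walshCoeff f S else 0 := by
  have hflip : 𝔼 ε, f (flipAt i ε) * walsh S ε = 𝔼 ε, f ε * walsh S (flipAt i ε) := by
    conv_lhs => rw [← expect_comp_flipAt i]
    simp only [flipAt_involutive i _]
  have hsplit : walshCoeff (flipDiff i f) S
      = (walshCoeff f S - 𝔼 ε, f (flipAt i ε) * walsh S ε) / 2 := by
    simp only [walshCoeff, flipDiff, ← expect_sub_distrib, expect_div]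
    exact expect_congr rfl fun ε _ ↦ by ring
  have hcoeff : 𝔼 ε, f ε * walsh S ε = walshCoeff f S := rfl
  rw [hsplit, hflip]
  split_ifs with hi
  · simp only [walsh_flipAt, hi, if_true, mul_neg, expect_neg_distrib, hcoeff]
    ring
  · simp only [walsh_flipAt, hi, if_false, hcoeff]
    ring

lemma sum_card_mul_sq_walshCoeff (f : (ι → Bool) → ℝ) :
    ∑ S, (S.card : ℝ) * walshCoeff f S ^ 2 = ∑ i, 𝔼 ε, flipDiff i f ε ^ 2 := by
  simp only [← sum_sq_walshCoeff, walshCoeff_flipDiff, ite_pow, zero_pow two_ne_zero]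
  rw [sum_comm]
  refine sum_congr rfl fun S _ ↦ ?_
  rw [sum_ite_mem, univ_inter, sum_const, nsmul_eq_mul]

lemma sq_walshCoeff_le {f : (ι → Bool) → ℝ} (hf : ∀ ε, f (fun k ↦ !ε k) = f ε) (S : Finset ι) :
    walshCoeff f S ^ 2 ≤ (if S = ∅ then walshCoeff f S ^ 2 else 0)
      + (S.card : ℝ) * walshCoeff f S ^ 2 / 2 := by
  split_ifs with hS
  · simp [hS]
  obtain hcard | hcard : S.card = 1 ∨ 2 ≤ S.card := by
    have := card_pos.mpr (nonempty_iff_ne_empty.mpr hS)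
    omega
  · simp [walshCoeff_eq_zero_of_odd hf (hcard ▸ odd_one)]
  · have : (2 : ℝ) ≤ S.card := by exact_mod_cast hcard
    nlinarith [sq_nonneg (walshCoeff f S)]

theorem expect_sq_le_of_even {f : (ι → Bool) → ℝ} (hf : ∀ ε, f (fun k ↦ !ε k) = f ε) :
    𝔼 ε, f ε ^ 2 ≤ (𝔼 ε, f ε) ^ 2 + (∑ i, 𝔼 ε, flipDiff i f ε ^ 2) / 2 := by
  calc 𝔼 ε, f ε ^ 2 = ∑ S, walshCoeff f S ^ 2 := (sum_sq_walshCoeff f).symm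
    _ ≤ ∑ S, ((if S = ∅ then walshCoeff f S ^ 2 else 0) + (S.card : ℝ) * walshCoeff f S ^ 2 / 2) :=
        sum_le_sum fun S _ ↦ sq_walshCoeff_le hf S
    _ = (𝔼 ε, f ε) ^ 2 + (∑ i, 𝔼 ε, flipDiff i f ε ^ 2) / 2 := by
        rw [sum_add_distrib, sum_ite_eq', ← sum_div,
          sum_card_mul_sq_walshCoeff, walshCoeff_empty]
        simp

end Walsh

section Khintchine

variable {ι : Type*} [Fintype ι] [DecidableEq ι]

lemma expect_radSign_mul_radSign (j k : ι) :
    𝔼 ε : ι → Bool, radSign (ε j) * radSign (ε k) = if j = k then 1 else 0 := by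
  split_ifs with hjk
  · simp [hjk, radSign_mul_self]
  · rw [← expect_expect_update _ j]
    simp only [Function.update_self, Function.update_of_ne (Ne.symm hjk), ← expect_mul,
      expect_radSign, zero_mul, expect_const_zero]

lemma expect_sq_sum_radSign_mul (u : ι → ℝ) :
    𝔼 ε : ι → Bool, (∑ k, radSign (ε k) * u k) ^ 2 = ∑ k, u k ^ 2 := by
  simp only [sq, sum_mul_sum, expect_sum_comm]
  calc ∑ j, ∑ k, 𝔼 ε : ι → Bool, radSign (ε j) * u j * (radSign (ε k) * u k)
      = ∑ j, ∑ k, u j * u k * 𝔼 ε : ι → Bool, radSign (ε j) * radSign (ε k) := by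
        simp only [mul_expect]
        exact sum_congr rfl fun j _ ↦ sum_congr rfl fun k _ ↦
          expect_congr rfl fun ε _ ↦ by ring
    _ = ∑ k, u k * u k := by simp [expect_radSign_mul_radSign]

lemma abs_flipDiff_abs_sum_radSign_mul_le (u : ι → ℝ) (i : ι) (ε : ι → Bool) :
    |flipDiff i (fun ε ↦ |∑ k, radSign (ε k) * u k|) ε| ≤ |u i| := by
  set R := ∑ k ∈ univ.erase i, radSign (ε k) * u k
  have hε : ∑ k, radSign (ε k) * u k = radSign (ε i) * u i + R :=
    (add_sum_erase _ _ (mem_univ i)).symm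
  have hflip : ∑ k, radSign (flipAt i ε k) * u k = -(radSign (ε i) * u i) + R := by
    rw [← add_sum_erase _ _ (mem_univ i), flipAt_self, radSign_not, neg_mul]
    congr 1
    exact sum_congr rfl fun k hk ↦ by rw [flipAt_of_ne (ne_of_mem_erase hk)]
  calc |flipDiff i (fun ε ↦ |∑ k, radSign (ε k) * u k|) ε|
      = |(|radSign (ε i) * u i + R| - |-(radSign (ε i) * u i) + R|)| / 2 := by
        rw [flipDiff, hε, hflip, abs_div, abs_two]
    _ ≤ |(radSign (ε i) * u i + R) - (-(radSign (ε i) * u i) + R)| / 2 := by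
        gcongr ?_ / 2
        exact abs_abs_sub_abs_le_abs_sub _ _
    _ = |u i| := by
        rw [abs_eq_abs.mpr (Or.inl (show _ = 2 * (radSign (ε i) * u i) by ring)), abs_mul,
          abs_mul, abs_two]
        cases ε i <;> simp [radSign]

theorem szarek_khintchine (u : ι → ℝ) :
    ∑ k, u k ^ 2 ≤ 2 * (𝔼 ε : ι → Bool, |∑ k, radSign (ε k) * u k|) ^ 2 := by
  set f : (ι → Bool) → ℝ := fun ε ↦ |∑ k, radSign (ε k) * u k|
  have hf_even : ∀ ε, f (fun k ↦ !ε k) = f ε := fun ε ↦ by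
    simp only [f, radSign_not, neg_mul, sum_neg_distrib, abs_neg]
  have hf_sq : 𝔼 ε, f ε ^ 2 = ∑ k, u k ^ 2 := by
    simp only [f, sq_abs, expect_sq_sum_radSign_mul]
  have hinfluence : ∑ i, 𝔼 ε, flipDiff i f ε ^ 2 ≤ ∑ k, u k ^ 2 :=
    sum_le_sum fun i _ ↦ expect_le univ_nonempty fun ε _ ↦
      sq_le_sq.mpr (abs_flipDiff_abs_sum_radSign_mul_le u i ε)
  have hpoincare := expect_sq_le_of_even hf_even
  linarith

lemma sqrt_sum_sq_le_sqrt_two_mul_expect_abs (u : ι → ℝ) :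
    √(∑ k, u k ^ 2) ≤ √2 * 𝔼 ε : ι → Bool, |∑ k, radSign (ε k) * u k| := by
  have hE : 0 ≤ 𝔼 ε : ι → Bool, |∑ k, radSign (ε k) * u k| :=
    expect_nonneg fun _ _ ↦ abs_nonneg _
  calc √(∑ k, u k ^ 2) ≤ √(2 * (𝔼 ε : ι → Bool, |∑ k, radSign (ε k) * u k|) ^ 2) :=
        Real.sqrt_le_sqrt (szarek_khintchine u)
    _ = √2 * 𝔼 ε : ι → Bool, |∑ k, radSign (ε k) * u k| := by
        rw [Real.sqrt_mul zero_le_two, Real.sqrt_sq hE]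

end Khintchine

section Contraction

variable {α : Type*} {Φ : Finset α} (hΦ : Φ.Nonempty)

lemma add_add_abs_sub_le_sup'_add_sup' (A g : α → ℝ) {p q : α} (hp : p ∈ Φ) (hq : q ∈ Φ) :
    A p + A q + |g p - g q| ≤ Φ.sup' hΦ (fun r ↦ A r + g r) + Φ.sup' hΦ (fun r ↦ A r - g r) := by
  have h1 := le_sup' (fun r ↦ A r + g r) hp
  have h2 := le_sup' (fun r ↦ A r - g r) hq
  have h3 := le_sup' (fun r ↦ A r + g r) hq
  have h4 := le_sup' (fun r ↦ A r - g r) hp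
  rcases abs_cases (g p - g q) with ⟨h, _⟩ | ⟨h, _⟩ <;> linarith

theorem expect_sup'_add_radSign_mul_le {κ : Type*} [Fintype κ] [DecidableEq κ]
    (A h : α → ℝ) (v : α → κ → ℝ)
    (hlip : ∀ p ∈ Φ, ∀ q ∈ Φ, h p - h q ≤ √(∑ k, (v p k - v q k) ^ 2)) :
    𝔼 b, Φ.sup' hΦ (fun r ↦ A r + radSign b * h r)
      ≤ 𝔼 τ : κ → Bool, Φ.sup' hΦ (fun r ↦ A r + √2 * ∑ k, radSign (τ k) * v r k) := by
  obtain ⟨p, hp, hp_max⟩ := exists_mem_eq_sup' hΦ (fun r ↦ A r + h r)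
  obtain ⟨q, hq, hq_max⟩ := exists_mem_eq_sup' hΦ (fun r ↦ A r - h r)
  set g : (κ → Bool) → α → ℝ := fun τ r ↦ √2 * ∑ k, radSign (τ k) * v r k with hg
  have hg_not (τ : κ → Bool) (r : α) : g (fun k ↦ !τ k) r = -g τ r := by
    simp [hg, radSign_not]
  have hg_sub (τ : κ → Bool) : |g τ p - g τ q| = √2 * |∑ k, radSign (τ k) * (v p k - v q k)| := by
    simp only [hg, ← mul_sub, ← sum_sub_distrib, abs_mul, abs_of_nonneg (Real.sqrt_nonneg 2)]
  have htrue : Φ.sup' hΦ (fun r ↦ A r + radSign true * h r) = A p + h p := by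
    rw [← hp_max]
    exact sup'_congr hΦ rfl fun r _ ↦ by simp [radSign]
  have hfalse : Φ.sup' hΦ (fun r ↦ A r + radSign false * h r) = A q - h q := by
    rw [← hq_max]
    exact sup'_congr hΦ rfl fun r _ ↦ by simp [radSign, sub_eq_add_neg]
  calc 𝔼 b, Φ.sup' hΦ (fun r ↦ A r + radSign b * h r)
      = (A p + A q + (h p - h q)) / 2 := by
        rw [Fintype.expect_eq_sum_div_card, Fintype.sum_bool, htrue, hfalse, Fintype.card_bool]
        push_cast
        ring
    _ ≤ (A p + A q + √2 * 𝔼 τ : κ → Bool, |∑ k, radSign (τ k) * (v p k - v q k)|) / 2 := by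
        gcongr
        exact (hlip p hp q hq).trans (sqrt_sum_sq_le_sqrt_two_mul_expect_abs _)
    _ = 𝔼 τ, (A p + A q + |g τ p - g τ q|) / 2 := by
        simp only [hg_sub, ← expect_div, expect_add_distrib, Fintype.expect_const,
          mul_expect]
    _ ≤ 𝔼 τ, (Φ.sup' hΦ (fun r ↦ A r + g τ r) + Φ.sup' hΦ (fun r ↦ A r - g τ r)) / 2 :=
        expect_le_expect fun τ _ ↦ by
          gcongr ?_ / 2
          exact add_add_abs_sub_le_sup'_add_sup' hΦ A (g τ) hp hq
    _ = 𝔼 τ, Φ.sup' hΦ (fun r ↦ A r + g τ r) := by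
        have hsymm : 𝔼 τ, Φ.sup' hΦ (fun r ↦ A r - g τ r)
            = 𝔼 τ, Φ.sup' hΦ (fun r ↦ A r + g τ r) := by
          rw [← expect_comp_not]
          simp only [hg_not, sub_neg_eq_add]
        rw [← expect_div, expect_add_distrib, hsymm]
        ring

theorem expect_sup'_add_sum_radSign_mul_le {ι κ : Type*} [Fintype ι] [DecidableEq ι]
    [Fintype κ] [DecidableEq κ] (H : ι → α → ℝ) (V : ι → α → κ → ℝ)
    (hlip : ∀ i, ∀ p ∈ Φ, ∀ q ∈ Φ, H i p - H i q ≤ √(∑ k, (V i p k - V i q k) ^ 2))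
    (S : Finset ι) (A : α → ℝ) :
    𝔼 s : ι → Bool, Φ.sup' hΦ (fun r ↦ A r + ∑ i ∈ S, radSign (s i) * H i r)
      ≤ 𝔼 t : ι → κ → Bool,
          Φ.sup' hΦ (fun r ↦ A r + √2 * ∑ i ∈ S, ∑ k, radSign (t i k) * V i r k) := by
  induction S using Finset.induction_on generalizing A with
  | empty => simp
  | insert j S hj ih =>
    have hne : ∀ i ∈ S, i ≠ j := fun i hi ↦ ne_of_mem_of_not_mem hi hj
    have hH (s : ι → Bool) (b : Bool) (r : α) : ∑ i ∈ S, radSign (Function.update s j b i) * H i r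
        = ∑ i ∈ S, radSign (s i) * H i r :=
      sum_congr rfl fun i hi ↦ by rw [Function.update_of_ne (hne i hi)]
    have hV (t : ι → κ → Bool) (τ : κ → Bool) (r : α) :
        ∑ i ∈ S, ∑ k, radSign (Function.update t j τ i k) * V i r k
          = ∑ i ∈ S, ∑ k, radSign (t i k) * V i r k :=
      sum_congr rfl fun i hi ↦ by rw [Function.update_of_ne (hne i hi)]
    calc 𝔼 s : ι → Bool, Φ.sup' hΦ (fun r ↦ A r + ∑ i ∈ insert j S, radSign (s i) * H i r)
        = 𝔼 b, 𝔼 s : ι → Bool,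
            Φ.sup' hΦ (fun r ↦ (A r + radSign b * H j r) + ∑ i ∈ S, radSign (s i) * H i r) := by
          rw [← expect_expect_update _ j, expect_comm]
          refine expect_congr rfl fun b _ ↦ expect_congr rfl fun s _ ↦
            sup'_congr hΦ rfl fun r _ ↦ ?_
          rw [sum_insert hj, Function.update_self, hH]
          ring
      _ ≤ 𝔼 b, 𝔼 t : ι → κ → Bool, Φ.sup' hΦ (fun r ↦
            (A r + radSign b * H j r) + √2 * ∑ i ∈ S, ∑ k, radSign (t i k) * V i r k) :=
          expect_le_expect fun b _ ↦ ih _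
      _ = 𝔼 t : ι → κ → Bool, 𝔼 b, Φ.sup' hΦ (fun r ↦
            (A r + √2 * ∑ i ∈ S, ∑ k, radSign (t i k) * V i r k) + radSign b * H j r) := by
          rw [expect_comm]
          refine expect_congr rfl fun t _ ↦ expect_congr rfl fun b _ ↦
            sup'_congr hΦ rfl fun r _ ↦ by ring
      _ ≤ 𝔼 t : ι → κ → Bool, 𝔼 τ : κ → Bool, Φ.sup' hΦ (fun r ↦
            (A r + √2 * ∑ i ∈ S, ∑ k, radSign (t i k) * V i r k)
              + √2 * ∑ k, radSign (τ k) * V j r k) :=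
          expect_le_expect fun t _ ↦
            expect_sup'_add_radSign_mul_le hΦ _ (H j) (V j) (hlip j)
      _ = 𝔼 t : ι → κ → Bool,
            Φ.sup' hΦ (fun r ↦ A r + √2 * ∑ i ∈ insert j S, ∑ k, radSign (t i k) * V i r k) := by
          conv_rhs => rw [← expect_expect_update _ j]
          refine expect_congr rfl fun t _ ↦ expect_congr rfl fun τ _ ↦
            sup'_congr hΦ rfl fun r _ ↦ ?_
          rw [sum_insert hj, Function.update_self, hV]
          ring

theorem expect_sup'_sum_radSign_mul_le {ι κ : Type*} [Fintype ι] [DecidableEq ι]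
    [Fintype κ] [DecidableEq κ] (H : ι → α → ℝ) (V : ι → α → κ → ℝ)
    (hlip : ∀ i, ∀ p ∈ Φ, ∀ q ∈ Φ, H i p - H i q ≤ √(∑ k, (V i p k - V i q k) ^ 2)) :
    𝔼 s : ι → Bool, Φ.sup' hΦ (fun r ↦ ∑ i, radSign (s i) * H i r)
      ≤ √2 * 𝔼 t : ι → κ → Bool, Φ.sup' hΦ (fun r ↦ ∑ i, ∑ k, radSign (t i k) * V i r k) := by
  have hscale (t : ι → κ → Bool) : √2 * Φ.sup' hΦ (fun r ↦ ∑ i, ∑ k, radSign (t i k) * V i r k)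
      = Φ.sup' hΦ (fun r ↦ √2 * ∑ i, ∑ k, radSign (t i k) * V i r k) :=
    apply_sup'_eq_sup'_comp hΦ _ fun x y ↦ mul_max_of_nonneg x y (Real.sqrt_nonneg 2)
  simpa [mul_expect, hscale] using
    expect_sup'_add_sum_radSign_mul_le hΦ H V hlip univ 0

end Contraction

lemma sqrt_sum_sq_sub_eq_dist {ι : Type*} [Fintype ι] (a b : ι → ℝ) :
    √(∑ k, (a k - b k) ^ 2) = dist (WithLp.toLp 2 a) (WithLp.toLp 2 b) := by
  simp [EuclideanSpace.dist_eq, Real.dist_eq, sq_abs]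

/-- Vector-valued Rademacher contraction (Maurer): each `hᵢ(z) = ‖z − y'ᵢ‖₂` is
1-Lipschitz for the ℓ² norm, and the Rademacher average of `hᵢ ∘ f` over a family `F`
of `ℝ^d`-valued functions is bounded by `√2` times the doubly-indexed coordinatewise
Rademacher average. Expectations over i.i.d. uniform signs are written as averages
over all sign patterns. -/
theorem vector_contraction
    {X : Type*} (d n : ℕ) (y' : Fin n → Fin d → ℝ)
    (F : Set (X → Fin d → ℝ)) (hF : F.Finite) (hF' : F.Nonempty)
    (x : Fin n → X) :
    (∀ i : Fin n, ∀ z z' : Fin d → ℝ,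
        |Real.sqrt (∑ k, (z k - y' i k) ^ 2) - Real.sqrt (∑ k, (z' k - y' i k) ^ 2)|
          ≤ Real.sqrt (∑ k, (z k - z' k) ^ 2)) ∧
    (1 / (2 : ℝ) ^ n) *
        ∑ s : Fin n → Bool,
          sSup ((fun f : X → Fin d → ℝ =>
            ∑ i, radSign (s i) * Real.sqrt (∑ k, (f (x i) k - y' i k) ^ 2)) '' F)
      ≤ Real.sqrt 2 *
        ((1 / (2 : ℝ) ^ (n * d)) *
          ∑ t : Fin n → Fin d → Bool,
            sSup ((fun f : X → Fin d → ℝ =>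
              ∑ i, ∑ k, radSign (t i k) * f (x i) k) '' F)) := by
  have hlip (i : Fin n) (z z' : Fin d → ℝ) :
      |√(∑ k, (z k - y' i k) ^ 2) - √(∑ k, (z' k - y' i k) ^ 2)| ≤ √(∑ k, (z k - z' k) ^ 2) := by
    simpa only [sqrt_sum_sq_sub_eq_dist] using abs_dist_sub_le _ _ _
  refine ⟨hlip, ?_⟩
  have hΦ : hF.toFinset.Nonempty := hF.toFinset_nonempty.mpr hF'
  have hmaurer := expect_sup'_sum_radSign_mul_le hΦ (fun i f ↦ √(∑ k, (f (x i) k - y' i k) ^ 2))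
    (fun i f k ↦ f (x i) k) fun i p _ q _ ↦ (le_abs_self _).trans (hlip i _ _)
  simp only [sup'_eq_csSup_image, Set.Finite.coe_toFinset, Fintype.expect_eq_sum_div_card,
    Fintype.card_fun, Fintype.card_bool, Fintype.card_fin] at hmaurer
  convert hmaurer using 2 <;> push_cast <;> ring
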